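/- Let K be an algebraically closed field of characteristic 0 and let F = x² + y·z ∈ K[x,y,z]. For an invertible 3×3 matrix M over K, the following are equivalent: (i) there exists λ ∈ K, λ ≠ 0, with F∘M = λ·F; (ii) there exist a, b, c, d ∈ K with a·d − b·c ≠ 0 and μ ∈ K, μ ≠ 0, such that M = μ · [[a·d+b·c, b·d, −a·c], [2c·d, d², −c²], [−2a·b, −b², a²]]. Moreover, in case (ii) one has F∘M = μ²·(a·d−b·c)²·F. -/

import Mathlib

/-!
Let `G` be the Hessian of `F = x² + yz`. By polarization (`2 ≠ 0`), `F ∘ M = l • F` says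
`Mᵀ G M = l • G`; for `l ≠ 0` this makes `M` invertible, so also `M G⁻¹ Mᵀ = l • G⁻¹`, i.e. the
rows of `M` satisfy the relations of the dual conic. Together, these quadratic relations among
the entries of `M` let one read off `a, b, c, d, μ` rationally from `M`: normalise `a = 1` when
`M 2 2 ≠ 0`, and `a = 0, b = 1` otherwise. The converse and the scaling factor are a direct
computation.
-/

open MvPolynomial

/-- The polynomial `F ∘ M`, obtained by substituting the variable `i` by
`∑ j, M i j * X j` in `F`. -/
noncomputable def applyMatrix {K : Type*} [Field K]
    (M : Matrix (Fin 3) (Fin 3) K) (F : MvPolynomial (Fin 3) K) :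
    MvPolynomial (Fin 3) K :=
  aeval (fun i => ∑ j : Fin 3, C (M i j) * X j) F

open Matrix

section

variable {K : Type*} [Field K]

namespace Matrix

variable {n : Type*} [Fintype n]

theorem IsSymm.eq_of_dotProduct_mulVec_eq [DecidableEq n] [NeZero (2 : K)] {S T : Matrix n n K}
    (hS : S.IsSymm) (hT : T.IsSymm) (h : ∀ v, v ⬝ᵥ S *ᵥ v = v ⬝ᵥ T *ᵥ v) : S = T := by
  have diag (i : n) : S i i = T i i := by simpa using h (Pi.single i 1)
  ext i j
  have h_ij := h (Pi.single i 1 + Pi.single j 1)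
  simp only [mulVec_add, mulVec_single, MulOpposite.op_one, one_smul, dotProduct_add,
    add_dotProduct, single_dotProduct, col_apply, diag, one_mul, hS.apply i j, hT.apply i j] at h_ij
  exact mul_left_cancel₀ two_ne_zero (by linear_combination h_ij)

theorem isSymm_transpose_mul_mul (M : Matrix n n K) {G : Matrix n n K} (hG : G.IsSymm) :
    (Mᵀ * G * M).IsSymm := by
  rw [IsSymm, transpose_mul, transpose_mul, transpose_transpose, hG.eq, Matrix.mul_assoc]

theorem mul_mul_transpose_eq_smul [DecidableEq n] {M G H : Matrix n n K} {l : K} (hl : l ≠ 0)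
    (hGH : G * H = 1) (hM : Mᵀ * G * M = l • G) : M * H * Mᵀ = l • H := by
  have hleft : (l⁻¹ • (H * Mᵀ * G)) * M = 1 := by
    rw [smul_mul_assoc, Matrix.mul_assoc, Matrix.mul_assoc, ← Matrix.mul_assoc Mᵀ, hM,
      mul_smul_comm, smul_smul, inv_mul_cancel₀ hl, one_smul, mul_eq_one_comm.mp hGH]
  calc M * H * Mᵀ = l • (M * (l⁻¹ • (H * Mᵀ * G)) * H) := by
        rw [mul_smul_comm, smul_mul_assoc, smul_smul, mul_inv_cancel₀ hl, one_smul]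
        simp only [Matrix.mul_assoc, hGH, Matrix.mul_one]
    _ = l • H := by rw [mul_eq_one_comm.mp hleft, Matrix.one_mul]

end Matrix

theorem eval_applyMatrix (M : Matrix (Fin 3) (Fin 3) K) (F : MvPolynomial (Fin 3) K)
    (v : Fin 3 → K) : eval v (applyMatrix M F) = eval (M *ᵥ v) F := by
  induction F using MvPolynomial.induction_on with
  | C a => simp [applyMatrix]
  | add p q hp hq => simp_all [applyMatrix]
  | mul_X p i hp => simp_all [applyMatrix, mulVec, dotProduct]

noncomputable def conic : MvPolynomial (Fin 3) K := X 0 ^ 2 + X 1 * X 2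

def conicHessian : Matrix (Fin 3) (Fin 3) K := !![2, 0, 0; 0, 0, 1; 0, 1, 0]

def dualConicHessian : Matrix (Fin 3) (Fin 3) K := !![1, 0, 0; 0, 0, 2; 0, 2, 0]

/-- With `φ (s, t) = (s * t, t ^ 2, -s ^ 2)` the parametrisation of the conic, `sym2Matrix a b c d`
is characterised by `sym2Matrix a b c d *ᵥ φ (s, t) = φ (a * s + b * t, c * s + d * t)`. -/
def sym2Matrix (a b c d : K) : Matrix (Fin 3) (Fin 3) K :=
  !![a * d + b * c, b * d, -(a * c); 2 * c * d, d ^ 2, -(c ^ 2); -(2 * a * b), -(b ^ 2), a ^ 2]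

theorem conicHessian_isSymm : (conicHessian : Matrix (Fin 3) (Fin 3) K).IsSymm := by
  ext i j
  fin_cases i <;> fin_cases j <;> rfl

theorem conicHessian_mul_dualConicHessian [NeZero (2 : K)] :
    (conicHessian : Matrix (Fin 3) (Fin 3) K) * ((2 : K)⁻¹ • dualConicHessian) = 1 := by
  ext i j
  fin_cases i <;> fin_cases j <;>
    simp [conicHessian, dualConicHessian, Matrix.mul_apply, Fin.sum_univ_three, two_ne_zero]

theorem two_mul_eval_conic (v : Fin 3 → K) :
    2 * eval v conic = v ⬝ᵥ conicHessian *ᵥ v := by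
  simp only [conic, map_add, map_pow, eval_X, map_mul, dotProduct, mulVec, conicHessian, of_apply,
    cons_val', cons_val_fin_one, Fin.sum_univ_three, cons_val_zero, cons_val_one, cons_val]
  ring

theorem transpose_mul_conicHessian_mul_apply (M : Matrix (Fin 3) (Fin 3) K) (i j : Fin 3) :
    (Mᵀ * conicHessian * M : Matrix (Fin 3) (Fin 3) K) i j =
      2 * M 0 i * M 0 j + M 1 i * M 2 j + M 2 i * M 1 j := by
  simp only [conicHessian, Matrix.mul_apply, transpose_apply, of_apply, cons_val',
    cons_val_fin_one, Fin.sum_univ_three, cons_val_zero, cons_val_one, cons_val]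
  ring

theorem mul_dualConicHessian_mul_transpose_apply (M : Matrix (Fin 3) (Fin 3) K) (i j : Fin 3) :
    (M * dualConicHessian * Mᵀ : Matrix (Fin 3) (Fin 3) K) i j =
      M i 0 * M j 0 + 2 * M i 1 * M j 2 + 2 * M i 2 * M j 1 := by
  simp only [dualConicHessian, Matrix.mul_apply, transpose_apply, of_apply, cons_val',
    cons_val_fin_one, Fin.sum_univ_three, cons_val_zero, cons_val_one, cons_val]
  ring

theorem applyMatrix_smul_sym2Matrix (a b c d μ : K) :
    applyMatrix (μ • sym2Matrix a b c d) conic = C (μ ^ 2 * (a * d - b * c) ^ 2) * conic := by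
  simp only [applyMatrix, conic, aeval_eq_bind₁, map_add, map_pow, map_mul, bind₁_X_right,
    Fin.sum_univ_three, sym2Matrix, Matrix.smul_apply, of_apply, cons_val', cons_val_fin_one,
    cons_val_zero, cons_val_one, cons_val, smul_eq_mul, map_neg, map_sub, map_ofNat]
  ring

variable {M : Matrix (Fin 3) (Fin 3) K} {l : K}

theorem transpose_mul_conicHessian_mul_eq_smul [NeZero (2 : K)]
    (h : applyMatrix M conic = C l * conic) : Mᵀ * conicHessian * M = l • conicHessian := by
  refine (isSymm_transpose_mul_mul M conicHessian_isSymm).eq_of_dotProduct_mulVec_eq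
    (conicHessian_isSymm.smul l) fun v => ?_
  have hv := congrArg (fun p => 2 * eval v p) h
  simp only [eval_applyMatrix, map_mul, eval_C, mul_left_comm _ l, two_mul_eval_conic] at hv
  rw [smul_mulVec, dotProduct_smul, smul_eq_mul, ← hv, ← mulVec_mulVec, ← mulVec_mulVec,
    dotProduct_mulVec, vecMul_transpose]

theorem mul_dualConicHessian_mul_transpose_eq_smul [NeZero (2 : K)] (hl : l ≠ 0)
    (h : Mᵀ * conicHessian * M = l • conicHessian) :
    M * dualConicHessian * Mᵀ = l • dualConicHessian := by
  have h' := mul_mul_transpose_eq_smul hl conicHessian_mul_dualConicHessian h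
  rw [mul_smul_comm, smul_mul_assoc, smul_comm] at h'
  exact smul_right_injective _ (inv_ne_zero (two_ne_zero : (2 : K) ≠ 0)) h'

theorem exists_eq_smul_sym2Matrix_of_apply_two_two_ne_zero [NeZero (2 : K)] (hl : l ≠ 0)
    (hC22 : M 0 2 ^ 2 + M 1 2 * M 2 2 = 0)
    (hC02 : 2 * M 0 0 * M 0 2 + M 1 0 * M 2 2 + M 2 0 * M 1 2 = 0)
    (hC12 : 2 * M 0 1 * M 0 2 + M 1 1 * M 2 2 + M 2 1 * M 1 2 = l)
    (hR00 : M 0 0 ^ 2 + 4 * M 0 1 * M 0 2 = l) (hR22 : M 2 0 ^ 2 + 4 * M 2 1 * M 2 2 = 0)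
    (hR02 : M 0 0 * M 2 0 + 2 * M 0 1 * M 2 2 + 2 * M 0 2 * M 2 1 = 0) (h22 : M 2 2 ≠ 0) :
    ∃ a b c d μ : K, a * d - b * c ≠ 0 ∧ μ ≠ 0 ∧ M = μ • sym2Matrix a b c d := by
  have hdisc : (M 0 0 * M 2 2 - M 2 0 * M 0 2) ^ 2 = l * M 2 2 ^ 2 := by
    linear_combination M 2 2 ^ 2 * hR00 + M 0 2 ^ 2 * hR22 - 2 * M 0 2 * M 2 2 * hR02
  have hnum : M 0 0 * M 2 2 - M 2 0 * M 0 2 ≠ 0 := by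
    intro h
    rw [h, zero_pow two_ne_zero] at hdisc
    exact mul_ne_zero hl (pow_ne_zero 2 h22) hdisc.symm
  -- With `a = 1`, the last row and column of `μ • sym2Matrix 1 b c d` give `μ, b, c`, and then
  -- its `(0, 0)` entry gives `d`.
  refine ⟨1, -M 2 0 / (2 * M 2 2), -M 0 2 / M 2 2,
    (2 * M 0 0 * M 2 2 - M 2 0 * M 0 2) / (2 * M 2 2 ^ 2), M 2 2, ?_, h22, ?_⟩
  · have hdet : 1 * ((2 * M 0 0 * M 2 2 - M 2 0 * M 0 2) / (2 * M 2 2 ^ 2))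
        - (-M 2 0 / (2 * M 2 2)) * (-M 0 2 / M 2 2)
        = (M 0 0 * M 2 2 - M 2 0 * M 0 2) / M 2 2 ^ 2 := by
      field_simp
      ring
    rw [hdet]
    exact div_ne_zero hnum (pow_ne_zero 2 h22)
  · ext i j
    fin_cases i <;> fin_cases j <;> simp [sym2Matrix] <;> field_simp
    · ring
    · linear_combination 2 * M 2 2 * hR02 - M 0 2 * hR22
    · linear_combination M 2 2 * hC02 - M 2 0 * hC22
    · linear_combination 4 * M 2 2 ^ 2 * hC12 - 4 * M 2 2 ^ 2 * hR00 + 4 * M 2 2 * M 0 2 * hR02 -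
        M 0 2 ^ 2 * hR22 - 4 * M 2 1 * M 2 2 * hC22
    · linear_combination hC22
    · linear_combination hR22

theorem exists_eq_smul_sym2Matrix_of_apply_two_two_eq_zero (hl : l ≠ 0)
    (hC00 : M 0 0 ^ 2 + M 1 0 * M 2 0 = l) (hC11 : M 0 1 ^ 2 + M 1 1 * M 2 1 = 0)
    (hC22 : M 0 2 ^ 2 + M 1 2 * M 2 2 = 0)
    (hC01 : 2 * M 0 0 * M 0 1 + M 1 0 * M 2 1 + M 2 0 * M 1 1 = 0)
    (hC12 : 2 * M 0 1 * M 0 2 + M 1 1 * M 2 2 + M 2 1 * M 1 2 = l)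
    (hR22 : M 2 0 ^ 2 + 4 * M 2 1 * M 2 2 = 0) (h22 : M 2 2 = 0) :
    ∃ a b c d μ : K, a * d - b * c ≠ 0 ∧ μ ≠ 0 ∧ M = μ • sym2Matrix a b c d := by
  have h20 : M 2 0 = 0 :=
    pow_eq_zero_iff two_ne_zero |>.mp (by linear_combination hR22 - 4 * M 2 1 * h22)
  have h02 : M 0 2 = 0 :=
    pow_eq_zero_iff two_ne_zero |>.mp (by linear_combination hC22 - M 1 2 * h22)
  have h00 : M 0 0 ≠ 0 := fun h => hl (by linear_combination -hC00 + M 0 0 * h + M 1 0 * h20)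
  have h21 : M 2 1 ≠ 0 := fun h => hl (by
    linear_combination -hC12 + 2 * M 0 1 * h02 + M 1 1 * h22 + M 1 2 * h)
  -- `sym2Matrix 0 1 c d = !![c, d, 0; 2 * c * d, d ^ 2, -c ^ 2; 0, -1, 0]`
  refine ⟨0, 1, -M 0 0 / M 2 1, -M 0 1 / M 2 1, -M 2 1, ?_, neg_ne_zero.mpr h21, ?_⟩
  · have hdet : (0 : K) * (-M 0 1 / M 2 1) - 1 * (-M 0 0 / M 2 1) = M 0 0 / M 2 1 := by ring
    rw [hdet]
    exact div_ne_zero h00 h21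
  · ext i j
    fin_cases i <;> fin_cases j <;> simp [sym2Matrix] <;> (try field_simp)
    · exact h02
    · linear_combination hC01 - M 1 1 * h20
    · linear_combination hC11
    · linear_combination hC12 - hC00 - 2 * M 0 1 * h02 - M 1 1 * h22 + M 1 0 * h20
    · exact h20
    · exact h22

theorem exists_eq_smul_sym2Matrix [NeZero (2 : K)] (hl : l ≠ 0)
    (h : applyMatrix M conic = C l * conic) :
    ∃ a b c d μ : K, a * d - b * c ≠ 0 ∧ μ ≠ 0 ∧ M = μ • sym2Matrix a b c d := by
  have hcol := transpose_mul_conicHessian_mul_eq_smul h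
  have hrow := mul_dualConicHessian_mul_transpose_eq_smul hl hcol
  have col (i j : Fin 3) :
      2 * M 0 i * M 0 j + M 1 i * M 2 j + M 2 i * M 1 j = l * conicHessian i j := by
    rw [← transpose_mul_conicHessian_mul_apply, hcol, Matrix.smul_apply, smul_eq_mul]
  have row (i j : Fin 3) :
      M i 0 * M j 0 + 2 * M i 1 * M j 2 + 2 * M i 2 * M j 1 = l * dualConicHessian i j := by
    rw [← mul_dualConicHessian_mul_transpose_apply, hrow, Matrix.smul_apply, smul_eq_mul]
  have c00 := col 0 0
  have c11 := col 1 1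
  have c22 := col 2 2
  have c01 := col 0 1
  have c02 := col 0 2
  have c12 := col 1 2
  have r00 := row 0 0
  have r22 := row 2 2
  have r02 := row 0 2
  simp only [conicHessian, dualConicHessian, of_apply, cons_val', cons_val_zero, cons_val_one,
    cons_val_two, tail_cons, empty_val', cons_val_fin_one, vecHead, mul_zero, mul_one]
    at c00 c11 c22 c01 c02 c12 r00 r22 r02
  have half {x : K} (hx : 2 * x = 0) : x = 0 := (mul_eq_zero.mp hx).resolve_left two_ne_zero
  have hC00 : M 0 0 ^ 2 + M 1 0 * M 2 0 = l := sub_eq_zero.mp (half (by linear_combination c00))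
  have hC11 : M 0 1 ^ 2 + M 1 1 * M 2 1 = 0 := half (by linear_combination c11)
  have hC22 : M 0 2 ^ 2 + M 1 2 * M 2 2 = 0 := half (by linear_combination c22)
  by_cases h22 : M 2 2 = 0
  · exact exists_eq_smul_sym2Matrix_of_apply_two_two_eq_zero hl hC00 hC11 hC22 c01 c12
      (by linear_combination r22) h22
  · exact exists_eq_smul_sym2Matrix_of_apply_two_two_ne_zero hl hC22 c02 c12
      (by linear_combination r00) (by linear_combination r22) r02 h22

end

theorem conic_stabilizer_general
    {K : Type*} [Field K] [CharZero K]
    (F : MvPolynomial (Fin 3) K) (hF : F = (X 0) ^ 2 + X 1 * X 2)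
    (M : Matrix (Fin 3) (Fin 3) K) :
    ((∃ l : K, l ≠ 0 ∧ applyMatrix M F = MvPolynomial.C l * F) ↔
      (∃ a b c d μ : K, a * d - b * c ≠ 0 ∧ μ ≠ 0 ∧
        M = μ • !![a * d + b * c, b * d, -(a * c);
                   2 * c * d, d ^ 2, -(c ^ 2);
                   -(2 * a * b), -(b ^ 2), a ^ 2])) ∧
    (∀ a b c d μ : K, a * d - b * c ≠ 0 → μ ≠ 0 →
      M = μ • !![a * d + b * c, b * d, -(a * c);
                 2 * c * d, d ^ 2, -(c ^ 2);
                 -(2 * a * b), -(b ^ 2), a ^ 2] →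
      applyMatrix M F = MvPolynomial.C (μ ^ 2 * (a * d - b * c) ^ 2) * F) := by
  subst hF
  refine ⟨⟨fun ⟨l, hl, h⟩ => exists_eq_smul_sym2Matrix hl h, ?_⟩,
    fun a b c d μ _ _ hM => hM ▸ applyMatrix_smul_sym2Matrix a b c d μ⟩
  rintro ⟨a, b, c, d, μ, hdet, hμ, rfl⟩
  exact ⟨_, mul_ne_zero (pow_ne_zero 2 hμ) (pow_ne_zero 2 hdet),
    applyMatrix_smul_sym2Matrix a b c d μ⟩

theorem conic_stabilizer
    {K : Type*} [Field K] [IsAlgClosed K] [CharZero K]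
    (F : MvPolynomial (Fin 3) K) (hF : F = (X 0) ^ 2 + X 1 * X 2)
    (M : Matrix (Fin 3) (Fin 3) K) (hM : IsUnit M) :
    ((∃ l : K, l ≠ 0 ∧ applyMatrix M F = MvPolynomial.C l * F) ↔
      (∃ a b c d μ : K, a * d - b * c ≠ 0 ∧ μ ≠ 0 ∧
        M = μ • !![a * d + b * c, b * d, -(a * c);
                   2 * c * d, d ^ 2, -(c ^ 2);
                   -(2 * a * b), -(b ^ 2), a ^ 2])) ∧
    (∀ a b c d μ : K, a * d - b * c ≠ 0 → μ ≠ 0 →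
      M = μ • !![a * d + b * c, b * d, -(a * c);
                 2 * c * d, d ^ 2, -(c ^ 2);
                 -(2 * a * b), -(b ^ 2), a ^ 2] →
      applyMatrix M F = MvPolynomial.C (μ ^ 2 * (a * d - b * c) ^ 2) * F) :=
  conic_stabilizer_general F hF M
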